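/- Strict monotonicity of the speed ratio in the remaining resource level: assume 0 < φ ≤ 1, 0 < μ ≤ ψ, ω > 0, and at least one of φ < 1 or μ < ψ, and fix R⁺ > 0. Then the function s(a) = I₁(a, R⁺)/I₂(a, R⁺) is strictly decreasing on (0, R⁺): for 0 < a₁ < a₂ < R⁺ one has s(a₁) > s(a₂). -/

import Mathlib

open Real Filter intervalIntegral

/-- Nondimensional stationary-to-moving switching rate. -/
noncomputable def ksm (φ R : ℝ) : ℝ := φ - (φ - 1) * Real.exp (-R)

/-- Nondimensional moving-to-stationary switching rate. -/
noncomputable def kms (ψ μ ω R : ℝ) : ℝ := ψ - (ψ - μ) * Real.exp (-ω * R)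

/-- I₁(a,b) = ∫_a^b k_sm(r)/r dr. -/
noncomputable def I1 (φ a b : ℝ) : ℝ := ∫ r in a..b, ksm φ r / r

/-- I₂(a,b) = ∫_a^b k_ms(r)/r dr. -/
noncomputable def I2 (ψ μ ω a b : ℝ) : ℝ := ∫ r in a..b, kms ψ μ ω r / r

/-! On `[a₁, R⁺]` the integrands are `k_sm/r` and `k_ms/r`, whose ratio `k_sm/k_ms` is strictly
decreasing: `k_sm` decreases, `k_ms` increases and stays positive, and one of them is strict.
Splitting `∫_{a₁}^{R⁺} = ∫_{a₁}^{a₂} + ∫_{a₂}^{R⁺}` and comparing both pieces with the value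
`c = k_sm(a₂)/k_ms(a₂)` of that ratio gives `I₁(a₁,a₂) > c I₂(a₁,a₂)` and `I₁(a₂,R⁺) < c I₂(a₂,R⁺)`,
so `s(a₁)` is a mediant of a fraction above `c` and the fraction `s(a₂)` below `c`. -/

open Set MeasureTheory

theorem div_lt_add_div_add {A B C D c : ℝ} (hC : 0 < C) (hD : 0 < D) (hA : c * C < A)
    (hB : B < c * D) : B / D < (A + B) / (C + D) := by
  rw [div_lt_div_iff₀ hD (add_pos hC hD)]
  nlinarith [mul_lt_mul_of_pos_right hB hC, mul_lt_mul_of_pos_right hA hD]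

section RatioOfIntegrals

variable {f g : ℝ → ℝ} {a b : ℝ}

theorem intervalIntegral_lt_of_forall_lt (hab : a < b) (hf : IntervalIntegrable f volume a b)
    (hg : IntervalIntegrable g volume a b) (hlt : ∀ x ∈ Ioo a b, f x < g x) :
    ∫ x in a..b, f x < ∫ x in a..b, g x := by
  have := intervalIntegral_pos_of_pos_on (hg.sub hf) (fun x hx => sub_pos.2 (hlt x hx)) hab
  rwa [intervalIntegral.integral_sub hg hf, sub_pos] at this

theorem integral_div_integral_lt_of_strictAntiOn {a₁ a₂ : ℝ} (h12 : a₁ < a₂) (h2b : a₂ < b)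
    (hf : IntervalIntegrable f volume a₁ b) (hg : IntervalIntegrable g volume a₁ b)
    (hg_pos : ∀ x ∈ Ioo a₁ b, 0 < g x) (hanti : StrictAntiOn (fun x => f x / g x) (Ioo a₁ b)) :
    (∫ x in a₂..b, f x) / (∫ x in a₂..b, g x) < (∫ x in a₁..b, f x) / (∫ x in a₁..b, g x) := by
  have h2 : a₂ ∈ Ioo a₁ b := ⟨h12, h2b⟩
  have h2' : a₂ ∈ uIcc a₁ b := Icc_subset_uIcc (Ioo_subset_Icc_self h2)
  have hf₁ := hf.mono_set (uIcc_subset_uIcc_left h2')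
  have hf₂ := hf.mono_set (uIcc_subset_uIcc_right h2')
  have hg₁ := hg.mono_set (uIcc_subset_uIcc_left h2')
  have hg₂ := hg.mono_set (uIcc_subset_uIcc_right h2')
  set c := f a₂ / g a₂
  have hleft : c * ∫ x in a₁..a₂, g x < ∫ x in a₁..a₂, f x := by
    rw [← intervalIntegral.integral_const_mul]
    refine intervalIntegral_lt_of_forall_lt h12 (hg₁.const_mul c) hf₁ fun x hx => ?_
    have hx' : x ∈ Ioo a₁ b := ⟨hx.1, hx.2.trans h2b⟩
    exact (lt_div_iff₀ (hg_pos x hx')).1 (hanti hx' h2 hx.2)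
  have hright : ∫ x in a₂..b, f x < c * ∫ x in a₂..b, g x := by
    rw [← intervalIntegral.integral_const_mul]
    refine intervalIntegral_lt_of_forall_lt h2b hf₂ (hg₂.const_mul c) fun x hx => ?_
    have hx' : x ∈ Ioo a₁ b := ⟨h12.trans hx.1, hx.2⟩
    exact (div_lt_iff₀ (hg_pos x hx')).1 (hanti h2 hx' hx.1)
  have hC : 0 < ∫ x in a₁..a₂, g x :=
    intervalIntegral_pos_of_pos_on hg₁ (fun x hx => hg_pos x ⟨hx.1, hx.2.trans h2b⟩) h12
  have hD : 0 < ∫ x in a₂..b, g x :=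
    intervalIntegral_pos_of_pos_on hg₂ (fun x hx => hg_pos x ⟨h12.trans hx.1, hx.2⟩) h2b
  rw [← intervalIntegral.integral_add_adjacent_intervals hf₁ hf₂,
    ← intervalIntegral.integral_add_adjacent_intervals hg₁ hg₂]
  exact div_lt_add_div_add hC hD hleft hright

end RatioOfIntegrals

section SwitchingRates

variable {φ ψ μ ω : ℝ}

theorem continuous_ksm (φ : ℝ) : Continuous (ksm φ) := by
  unfold ksm; fun_prop

theorem continuous_kms (ψ μ ω : ℝ) : Continuous (kms ψ μ ω) := by
  unfold kms; fun_prop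

theorem ksm_pos (hφ0 : 0 < φ) (hφ1 : φ ≤ 1) (R : ℝ) : 0 < ksm φ R := by
  have := mul_nonneg (sub_nonneg.2 hφ1) (exp_pos (-R)).le
  unfold ksm; linarith

theorem ksm_antitone (hφ1 : φ ≤ 1) : Antitone (ksm φ) := fun r s hrs => by
  have := exp_le_exp.2 (neg_le_neg hrs)
  unfold ksm; nlinarith

theorem ksm_strictAnti (hφ1 : φ < 1) : StrictAnti (ksm φ) := fun r s hrs => by
  have := exp_lt_exp.2 (neg_lt_neg hrs)
  unfold ksm; nlinarith

theorem kms_monotone (hμψ : μ ≤ ψ) (hω : 0 ≤ ω) : Monotone (kms ψ μ ω) := fun r s hrs => by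
  have := exp_le_exp.2 (mul_le_mul_of_nonpos_left hrs (neg_nonpos.2 hω))
  unfold kms; nlinarith

theorem kms_strictMono (hμψ : μ < ψ) (hω : 0 < ω) : StrictMono (kms ψ μ ω) := fun r s hrs => by
  have := exp_lt_exp.2 (mul_lt_mul_of_neg_left hrs (neg_neg_iff_pos.2 hω))
  unfold kms; nlinarith

theorem kms_pos (hμ0 : 0 < μ) (hμψ : μ ≤ ψ) (hω : 0 ≤ ω) {R : ℝ} (hR : 0 ≤ R) :
    0 < kms ψ μ ω R :=
  hμ0.trans_le (by simpa [kms] using kms_monotone hμψ hω hR)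

theorem ksm_div_kms_strictAntiOn (hφ0 : 0 < φ) (hφ1 : φ ≤ 1) (hμ0 : 0 < μ) (hμψ : μ ≤ ψ)
    (hω : 0 < ω) (hne : φ < 1 ∨ μ < ψ) :
    StrictAntiOn (fun R => ksm φ R / kms ψ μ ω R) (Ici 0) := by
  intro r hr s _ hrs
  rcases hne with hφ | hμ
  · exact div_lt_div₀ (ksm_strictAnti hφ hrs) (kms_monotone hμψ hω.le hrs.le)
      (ksm_pos hφ0 hφ1 r).le (kms_pos hμ0 hμψ hω.le hr)
  · exact div_lt_div₀' (ksm_antitone hφ1 hrs.le) (kms_strictMono hμ hω hrs)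
      (ksm_pos hφ0 hφ1 r) (kms_pos hμ0 hμψ hω.le hr)

end SwitchingRates

theorem speed_ratio_strictAnti_general (φ ψ μ ω Rplus : ℝ)
    (hφ0 : 0 < φ) (hφ1 : φ ≤ 1) (hμ0 : 0 < μ) (hμψ : μ ≤ ψ) (hω : 0 < ω)
    (hne : φ < 1 ∨ μ < ψ) :
    ∀ a₁ a₂ : ℝ, 0 < a₁ → a₁ < a₂ → a₂ < Rplus →
      I1 φ a₂ Rplus / I2 ψ μ ω a₂ Rplus < I1 φ a₁ Rplus / I2 ψ μ ω a₁ Rplus := by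
  intro a₁ a₂ h1 h12 h2R
  have hint : ∀ k : ℝ → ℝ, Continuous k → IntervalIntegrable (fun r => k r / r) volume a₁ Rplus :=
    fun k hk => (hk.continuousOn.div continuousOn_id fun x hx => (h1.trans_le hx.1).ne')
      |>.intervalIntegrable_of_Icc (h12.trans h2R).le
  refine integral_div_integral_lt_of_strictAntiOn h12 h2R (hint _ (continuous_ksm φ))
    (hint _ (continuous_kms ψ μ ω))
    (fun x hx => div_pos (kms_pos hμ0 hμψ hω.le (h1.trans hx.1).le) (h1.trans hx.1)) ?_
  refine ((ksm_div_kms_strictAntiOn hφ0 hφ1 hμ0 hμψ hω hne).mono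
    fun x hx => (h1.trans hx.1).le).congr fun x hx => ?_
  exact (div_div_div_cancel_right₀ (h1.trans hx.1).ne' _ _).symm

/-- Strict monotonicity of the speed ratio in the remaining resource level:
s(a) = I₁(a,R⁺)/I₂(a,R⁺) is strictly decreasing on (0, R⁺). -/
theorem speed_ratio_strictAnti (φ ψ μ ω Rplus : ℝ)
    (hφ0 : 0 < φ) (hφ1 : φ ≤ 1) (hμ0 : 0 < μ) (hμψ : μ ≤ ψ) (hω : 0 < ω)
    (hne : φ < 1 ∨ μ < ψ) (hRp : 0 < Rplus) :
    ∀ a₁ a₂ : ℝ, 0 < a₁ → a₁ < a₂ → a₂ < Rplus →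
      I1 φ a₂ Rplus / I2 ψ μ ω a₂ Rplus < I1 φ a₁ Rplus / I2 ψ μ ω a₁ Rplus :=
  speed_ratio_strictAnti_general φ ψ μ ω Rplus hφ0 hφ1 hμ0 hμψ hω hne
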